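/- arXiv:2505.08551 — 3 statements merged into one kernel-verified Lean document; each statement's English description precedes it below -/
import Mathlib

section
/- In PG(2,q) with q an even power of 2, if a ∈ GF(q) is a primitive cube root of unity (a ≠ 1, a³ = 1), then C_a ∪ C_{a²} is an untouchable set of size 2q − 2, where C_k = V(kxy + z² + yz + xz). -/
/-- The point type of `PG(2,q)` over the field `F`: the projectivization of `F³`.
We also use this type for lines, via line coordinates. -/
abbrev PG2 (F : Type) [Field F] : Type := Projectivization F (Fin 3 → F)

/-- A point of `PG(2,q)` with homogeneous coordinates `(x : y : z)`. -/
noncomputable def pt {F : Type} [Field F] (x y z : F) (h : ![x, y, z] ≠ 0) : PG2 F :=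
  Projectivization.mk F ![x, y, z] h

lemma vec_ne_zero {F : Type} [Field F] {x y z : F} (i : Fin 3) (h : ![x, y, z] i ≠ 0) :
    ![x, y, z] ≠ 0 := fun hz => h (by simp [hz])

/-- Incidence between a line `l` (in line coordinates) and a point `P`. This is well defined:
the pairing is bilinear, so its vanishing is independent of the choice of representatives. -/
def inc {F : Type} [Field F] (l P : PG2 F) : Prop :=
  l.rep 0 * P.rep 0 + l.rep 1 * P.rep 1 + l.rep 2 * P.rep 2 = 0

/-- A set of points is untouchable if no line meets it in exactly one point. -/
def Untouchable {F : Type} [Field F] (S : Set (PG2 F)) : Prop :=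
  ∀ l : PG2 F, {P ∈ S | inc l P}.ncard ≠ 1

/-- A line `l` is tangent to a point set `S` if it meets `S` in exactly one point. -/
def IsTangent {F : Type} [Field F] (l : PG2 F) (S : Set (PG2 F)) : Prop :=
  {P ∈ S | inc l P}.ncard = 1

/-- A nondegenerate conic in `PG(2,q)` is, combinatorially, an oval: a set of `q + 1` points
met by every line in at most `2` points. -/
def IsOval {F : Type} [Field F] (q : ℕ) (S : Set (PG2 F)) : Prop :=
  S.ncard = q + 1 ∧ ∀ l : PG2 F, {P ∈ S | inc l P}.ncard ≤ 2

/-- The conic `C_k = V(kxy + z² + yz + xz)` (membership tested on the canonical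
representative; this is representative-independent since the form is homogeneous). -/
def Cq {F : Type} [Field F] (k : F) : Set (PG2 F) :=
  {P | k * P.rep 0 * P.rep 1 + P.rep 2 ^ 2 + P.rep 1 * P.rep 2 + P.rep 0 * P.rep 2 = 0}

/-!
In characteristic `2` the polar form of `Q_k = kxy + z² + yz + xz` has the nucleus
`N_k = (1 : 1 : k)` as radical, so the tangent to `C_k` at any point passes through `N_k`, and
every other line through a point of `C_k` meets `C_k` a second time. A line meeting
`C_a ∪ C_{a²}` in a single point `P ∈ C_k` would therefore pass through `N_k`, which lies on
the other conic but not on `C_k`.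

For the count, projection from `(1 : 0 : 0)` identifies each `C_k` with `PG(1, q)`, so
`|C_k| = q + 1`, while `Q_a - Q_{a²} = (a - a²)xy` shows that the two conics share exactly the
four points with `xy = 0`; hence `|C_a ∪ C_{a²}| = 2(q + 1) - 4`.
-/

open Projectivization

open scoped LinearAlgebra.Projectivization

section

variable {F : Type} [Field F] {k k' : F}

lemma smul_vec3_eq {v : Fin 3 → F} {c x y z : F} (h0 : c * x = v 0) (h1 : c * y = v 1)
    (h2 : c * z = v 2) : c • ![x, y, z] = v := by
  ext i
  fin_cases i
  exacts [h0, h1, h2]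

def conicForm (k : F) (v : Fin 3 → F) : F :=
  k * v 0 * v 1 + v 2 ^ 2 + v 1 * v 2 + v 0 * v 2

def conicPolar (k : F) (p : Fin 3 → F) : Fin 3 → F :=
  ![k * p 1 + p 2, k * p 0 + p 2, p 0 + p 1 + 2 * p 2]

lemma conicForm_smul (c : F) (v : Fin 3 → F) :
    conicForm k (c • v) = c ^ 2 * conicForm k v := by
  simp only [conicForm, Pi.smul_apply, smul_eq_mul]
  ring

lemma conicForm_add (p v : Fin 3 → F) :
    conicForm k (p + v) = conicForm k p + conicForm k v + conicPolar k p ⬝ᵥ v := by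
  simp only [conicForm, conicPolar, Pi.add_apply, Matrix.vec3_dotProduct, Matrix.cons_val_zero,
    Matrix.cons_val_one, Matrix.cons_val_two, Matrix.head_cons, Matrix.tail_cons]
  ring

lemma conicPolar_smul (c : F) (p : Fin 3 → F) :
    conicPolar k (c • p) = c • conicPolar k p := by
  simp only [conicPolar, Pi.smul_apply, smul_eq_mul, Matrix.smul_vec3]
  exact Matrix.vec3_eq (by ring) (by ring) (by ring)

lemma conicPolar_dotProduct_self (p : Fin 3 → F) :
    conicPolar k p ⬝ᵥ p = 2 * conicForm k p := by
  simp only [conicForm, conicPolar, Matrix.vec3_dotProduct, Matrix.cons_val_zero,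
    Matrix.cons_val_one, Matrix.cons_val_two, Matrix.head_cons, Matrix.tail_cons]
  ring

lemma conicPolar_dotProduct_nucleus [CharP F 2] (p : Fin 3 → F) :
    conicPolar k p ⬝ᵥ ![1, 1, k] = 0 := by
  rw [conicPolar, Matrix.vec3_dotProduct']
  linear_combination (k * p 1 + p 2 + k * p 0 + k * p 2) * CharTwo.two_eq_zero (R := F)

lemma eq_smul_of_conicPolar_eq_zero [CharP F 2] {p : Fin 3 → F} (h : conicPolar k p = 0) :
    p = p 0 • ![1, 1, k] := by
  have h1 : k * p 0 + p 2 = 0 := congrFun h 1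
  have h2 : p 0 + p 1 + 2 * p 2 = 0 := congrFun h 2
  have two := CharTwo.two_eq_zero (R := F)
  exact (smul_vec3_eq (mul_one _) (by linear_combination -h2 + (p 0 + p 2) * two)
    (by linear_combination -h1 + k * p 0 * two)).symm

lemma conicForm_nucleus : conicForm k' ![1, 1, k] = k' + k ^ 2 + 2 * k := by
  simp only [conicForm, Matrix.cons_val_zero, Matrix.cons_val_one, Matrix.cons_val_two,
    Matrix.head_cons, Matrix.tail_cons]
  ring

lemma mem_Cq_mk {v : Fin 3 → F} (hv : v ≠ 0) : mk F v hv ∈ Cq k ↔ conicForm k v = 0 := by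
  obtain ⟨c, hc⟩ := exists_smul_eq_mk_rep F v hv
  change conicForm k (mk F v hv).rep = 0 ↔ _
  rw [← hc, Units.smul_def, conicForm_smul]
  simp

lemma inc_iff_dotProduct {l P : PG2 F} : inc l P ↔ l.rep ⬝ᵥ P.rep = 0 := by
  rw [Matrix.vec3_dotProduct]
  rfl

lemma inc_mk {l : PG2 F} {v : Fin 3 → F} (hv : v ≠ 0) :
    inc l (mk F v hv) ↔ l.rep ⬝ᵥ v = 0 := by
  obtain ⟨c, hc⟩ := exists_smul_eq_mk_rep F v hv
  rw [inc_iff_dotProduct, ← hc, Units.smul_def, dotProduct_smul, smul_eq_mul]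
  simp

lemma mk_ne_mk_of_apply_eq_zero {v w : Fin 3 → F} (hv : v ≠ 0) (hw : w ≠ 0) (i : Fin 3)
    (hvi : v i = 0) (hwi : w i ≠ 0) : mk F v hv ≠ mk F w hw := by
  rw [Ne, mk_eq_mk_iff]
  rintro ⟨c, rfl⟩
  simp [Units.smul_def, c.ne_zero, hwi] at hvi

/-- In characteristic `2` every tangent of `C_k` passes through this point. -/
noncomputable def nucleus (k : F) : PG2 F :=
  pt 1 1 k (vec_ne_zero 0 one_ne_zero)

lemma nucleus_mem_Cq_iff [CharP F 2] : nucleus k ∈ Cq k' ↔ k' = k ^ 2 := by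
  rw [nucleus, pt, mem_Cq_mk, conicForm_nucleus, CharTwo.two_eq_zero (R := F), zero_mul, add_zero,
    CharTwo.add_eq_zero]

lemma exists_conicForm_eq_zero_of_dotProduct_nucleus_ne_zero [CharP F 2] {l p : Fin 3 → F}
    (hp : conicForm k p = 0) (hb : conicPolar k p ≠ 0) (hlp : l ⬝ᵥ p = 0)
    (hlN : l ⬝ᵥ ![1, 1, k] ≠ 0) :
    ∃ s, conicForm k s = 0 ∧ l ⬝ᵥ s = 0 ∧ conicPolar k p ⬝ᵥ s ≠ 0 := by
  set b := conicPolar k p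
  have hbp : b ⬝ᵥ p = 0 := by
    rw [conicPolar_dotProduct_self, hp, mul_zero]
  obtain ⟨w, hw⟩ : ∃ w, b ⬝ᵥ w ≠ 0 := by
    by_contra! h
    exact hb (dotProduct_eq_zero b h)
  -- `r` is a point of `l` off the tangent at `p`
  set r := (l ⬝ᵥ ![1, 1, k]) • w - (l ⬝ᵥ w) • ![1, 1, k]
  have hlr : l ⬝ᵥ r = 0 := by
    simp only [r, dotProduct_sub, dotProduct_smul, smul_eq_mul]
    ring
  have hbr : b ⬝ᵥ r ≠ 0 := by
    simp only [r, b, dotProduct_sub, dotProduct_smul, smul_eq_mul, conicPolar_dotProduct_nucleus,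
      mul_zero, sub_zero]
    exact mul_ne_zero hlN hw
  -- for `α = Q(r)`, `β = B(p, r)`: `Q(αp + βr) = αβ B(p, r) + β² Q(r) = 2 Q(r) β² = 0`
  refine ⟨conicForm k r • p + (b ⬝ᵥ r) • r, ?_, ?_, ?_⟩
  · rw [conicForm_add, conicForm_smul, conicForm_smul, conicPolar_smul, smul_dotProduct,
      dotProduct_smul, hp]
    simp only [smul_eq_mul]
    linear_combination conicForm k r * (b ⬝ᵥ r) ^ 2 * CharTwo.two_eq_zero (R := F)
  · simp only [dotProduct_add, dotProduct_smul, hlp, hlr, smul_eq_mul, mul_zero, add_zero]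
  · simp only [dotProduct_add, dotProduct_smul, hbp, smul_eq_mul, mul_zero, zero_add]
    exact mul_ne_zero hbr hbr

lemma inc_nucleus_or_exists_mem_Cq_inc_ne [CharP F 2] (hN : nucleus k ∉ Cq k)
    {l P : PG2 F} (hP : P ∈ Cq k) (hlP : inc l P) :
    inc l (nucleus k) ∨ ∃ P' ∈ Cq k, inc l P' ∧ P' ≠ P := by
  by_cases hlN : inc l (nucleus k)
  · exact Or.inl hlN
  right
  rw [nucleus, pt, inc_mk] at hlN
  have hb : conicPolar k P.rep ≠ 0 := by
    intro hb
    have hPN : P = nucleus k := by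
      rw [← mk_rep P, nucleus, pt, mk_eq_mk_iff']
      exact ⟨P.rep 0, (eq_smul_of_conicPolar_eq_zero hb).symm⟩
    exact hN (hPN ▸ hP)
  replace hP : conicForm k P.rep = 0 := hP
  obtain ⟨s, hs, hls, hbs⟩ :=
    exists_conicForm_eq_zero_of_dotProduct_nucleus_ne_zero hP hb (inc_iff_dotProduct.1 hlP) hlN
  have hs0 : s ≠ 0 := by
    rintro rfl
    simp at hbs
  refine ⟨mk F s hs0, (mem_Cq_mk hs0).2 hs, (inc_mk hs0).2 hls, ?_⟩
  rw [← mk_rep P, Ne, mk_eq_mk_iff']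
  rintro ⟨c, rfl⟩
  rw [dotProduct_smul, conicPolar_dotProduct_self, hP, mul_zero, smul_zero] at hbs
  exact hbs rfl

lemma exists_mem_Cq_union_inc_ne [CharP F 2] (hk : nucleus k ∈ Cq k' \ Cq k)
    {l P : PG2 F} (hP : P ∈ Cq k) (hlP : inc l P) :
    ∃ P' ∈ Cq k ∪ Cq k', inc l P' ∧ P' ≠ P := by
  rcases inc_nucleus_or_exists_mem_Cq_inc_ne hk.2 hP hlP with hlN | ⟨P', hP', hlP', hne⟩
  · exact ⟨nucleus k, Or.inr hk.1, hlN, fun h => hk.2 (h ▸ hP)⟩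
  · exact ⟨P', Or.inl hP', hlP', hne⟩

theorem untouchable_Cq_union [CharP F 2] (hk : nucleus k ∈ Cq k' \ Cq k)
    (hk' : nucleus k' ∈ Cq k \ Cq k') : Untouchable (Cq k ∪ Cq k') := by
  intro l hl
  obtain ⟨P, hlS⟩ := Set.ncard_eq_one.1 hl
  obtain ⟨hP, hlP⟩ : P ∈ {P ∈ Cq k ∪ Cq k' | inc l P} := hlS ▸ rfl
  obtain ⟨P', hP', hlP', hne⟩ : ∃ P' ∈ Cq k ∪ Cq k', inc l P' ∧ P' ≠ P := by
    rcases hP with hP | hP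
    · exact exists_mem_Cq_union_inc_ne hk hP hlP
    · simpa only [Set.union_comm] using exists_mem_Cq_union_inc_ne hk' hP hlP
  exact hne (show P' ∈ ({P} : Set (PG2 F)) from hlS ▸ ⟨hP', hlP'⟩)

lemma mk_eq_mk_iff_mul_eq_mul {u u' : Fin 2 → F} (hu : u ≠ 0) (hu' : u' ≠ 0) :
    mk F u hu = mk F u' hu' ↔ u 0 * u' 1 = u 1 * u' 0 := by
  rw [mk_eq_mk_iff']
  constructor
  · rintro ⟨c, rfl⟩
    simp only [Pi.smul_apply, smul_eq_mul]
    ring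
  · intro h
    have hu'i : u' 0 ≠ 0 ∨ u' 1 ≠ 0 := by
      by_contra! h'
      exact hu' (funext fun i => by fin_cases i <;> simp [h'])
    rcases hu'i with h0 | h1
    · refine ⟨u 0 / u' 0, funext (Fin.forall_fin_two.2 ⟨?_, ?_⟩)⟩ <;>
        simp only [Pi.smul_apply, smul_eq_mul] <;> field_simp
      linear_combination h
    · refine ⟨u 1 / u' 1, funext (Fin.forall_fin_two.2 ⟨?_, ?_⟩)⟩ <;>
        simp only [Pi.smul_apply, smul_eq_mul] <;> field_simp
      linear_combination -h

/-- The line through `(1 : 0 : 0)` and `(0 : s : t)` meets `C_k` again in `conicParam k ![s, t]`. -/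
def conicParam (k : F) (u : Fin 2 → F) : Fin 3 → F :=
  ![-(u 1 * (u 0 + u 1)), u 0 * (k * u 0 + u 1), u 1 * (k * u 0 + u 1)]

lemma conicParam_smul (c : F) (u : Fin 2 → F) :
    conicParam k (c • u) = c ^ 2 • conicParam k u := by
  simp only [conicParam, Pi.smul_apply, smul_eq_mul, Matrix.smul_vec3]
  exact Matrix.vec3_eq (by ring) (by ring) (by ring)

lemma conicForm_conicParam (u : Fin 2 → F) : conicForm k (conicParam k u) = 0 := by
  simp only [conicForm, conicParam, Matrix.cons_val_zero, Matrix.cons_val_one,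
    Matrix.cons_val_two, Matrix.head_cons, Matrix.tail_cons]
  ring

lemma conicParam_tangent : conicParam k ![1, -k] = ![k * (1 - k), 0, 0] := by
  simp only [conicParam, Matrix.cons_val_zero, Matrix.cons_val_one]
  exact Matrix.vec3_eq (by ring) (by ring) (by ring)

lemma conicParam_of_conicForm_eq_zero {v : Fin 3 → F} (hv : conicForm k v = 0) :
    (k * v 1 + v 2) • v = conicParam k ![v 1, v 2] := by
  unfold conicForm at hv
  ext i
  fin_cases i <;> simp only [conicParam, Pi.smul_apply, smul_eq_mul, Fin.isValue, Fin.zero_eta,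
    Fin.mk_one, Fin.reduceFinMk, Matrix.cons_val_zero, Matrix.cons_val_one, Matrix.cons_val,
    Matrix.cons_val_fin_one]
  · linear_combination hv
  all_goals ring

lemma conicParam_ne_zero (hk0 : k ≠ 0) (hk1 : k ≠ 1) {u : Fin 2 → F} (hu : u ≠ 0) :
    conicParam k u ≠ 0 := by
  intro h
  have h0 : -(u 1 * (u 0 + u 1)) = 0 := congrFun h 0
  have h1 : u 0 * (k * u 0 + u 1) = 0 := congrFun h 1
  have hu0 : u 0 = 0 := by
    by_cases hσ : k * u 0 + u 1 = 0
    · have : k * (1 - k) * u 0 ^ 2 = 0 := by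
        linear_combination h0 + (u 1 + (1 - k) * u 0) * hσ
      simpa [hk0, sub_eq_zero, hk1.symm] using this
    · exact (mul_eq_zero.1 h1).resolve_right hσ
  have hu1 : u 1 = 0 := by simpa [hu0] using h0
  exact hu (funext fun i => by fin_cases i <;> simp [hu0, hu1])

noncomputable def conicPoint (hk0 : k ≠ 0) (hk1 : k ≠ 1) : ℙ F (Fin 2 → F) → PG2 F :=
  Projectivization.lift (fun u => mk F (conicParam k u) (conicParam_ne_zero hk0 hk1 u.2))
    (by
      rintro ⟨-, hu⟩ ⟨u, -⟩ c rfl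
      exact (mk_eq_mk_iff' F _ _ _ _).2 ⟨c ^ 2, (conicParam_smul c u).symm⟩)

lemma conicPoint_mk (hk0 : k ≠ 0) (hk1 : k ≠ 1) {u : Fin 2 → F} (hu : u ≠ 0) :
    conicPoint hk0 hk1 (mk F u hu) = mk F (conicParam k u) (conicParam_ne_zero hk0 hk1 hu) :=
  rfl

lemma conicPoint_injective (hk0 : k ≠ 0) (hk1 : k ≠ 1) :
    Function.Injective (conicPoint hk0 hk1) := by
  intro U U' h
  induction U with | h u hu => ?_
  induction U' with | h u' hu' => ?_
  rw [conicPoint_mk, conicPoint_mk, mk_eq_mk_iff] at h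
  obtain ⟨c, hc⟩ := h
  rw [mk_eq_mk_iff_mul_eq_mul]
  have h1 : c * (u' 0 * (k * u' 0 + u' 1)) = u 0 * (k * u 0 + u 1) := congrFun hc 1
  have h2 : c * (u' 1 * (k * u' 0 + u' 1)) = u 1 * (k * u 0 + u 1) := congrFun hc 2
  by_cases hσ : k * u 0 + u 1 = 0
  · have hσ' : k * u' 0 + u' 1 = 0 := by
      by_contra hσ'
      apply hu'
      refine funext (Fin.forall_fin_two.2 ⟨?_, ?_⟩)
      · simpa [c.ne_zero, hσ', hσ] using h1
      · simpa [c.ne_zero, hσ', hσ] using h2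
    linear_combination u 0 * hσ' - u' 0 * hσ
  · refine mul_left_cancel₀ hσ ?_
    linear_combination u' 0 * h2 - u' 1 * h1

lemma range_conicPoint (hk0 : k ≠ 0) (hk1 : k ≠ 1) : Set.range (conicPoint hk0 hk1) = Cq k := by
  ext P
  constructor
  · rintro ⟨U, rfl⟩
    induction U with | h u hu => ?_
    exact (mem_Cq_mk _).2 (conicForm_conicParam u)
  · intro hP
    induction P using Projectivization.ind with | h v hv => ?_
    rw [mem_Cq_mk] at hP
    by_cases hσ : k * v 1 + v 2 = 0
    · -- `v` is the point `(1 : 0 : 0)`, the image of the tangent direction `(1 : -k)`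
      have hv1 : v 1 = 0 := by
        have : k * (k - 1) * v 1 ^ 2 = 0 := by
          unfold conicForm at hP
          linear_combination hP - (v 2 - k * v 1 + v 1 + v 0) * hσ
        simpa [hk0, sub_eq_zero, hk1] using this
      have hv2 : v 2 = 0 := by simpa [hv1] using hσ
      have hk : k * (1 - k) ≠ 0 := mul_ne_zero hk0 (sub_ne_zero.2 hk1.symm)
      refine ⟨mk F ![1, -k] (fun h => one_ne_zero (congrFun h 0)), ?_⟩
      rw [conicPoint_mk, eq_comm, mk_eq_mk_iff', conicParam_tangent]
      exact ⟨v 0 / (k * (1 - k)), smul_vec3_eq (div_mul_cancel₀ _ hk) (by rw [hv1, mul_zero])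
        (by rw [hv2, mul_zero])⟩
    · have hv' : ![v 1, v 2] ≠ 0 := fun h => hσ (by
        have h1 : v 1 = 0 := congrFun h 0
        have h2 : v 2 = 0 := congrFun h 1
        rw [h1, h2, mul_zero, add_zero])
      refine ⟨mk F ![v 1, v 2] hv', ?_⟩
      rw [conicPoint_mk, mk_eq_mk_iff']
      exact ⟨k * v 1 + v 2, conicParam_of_conicForm_eq_zero hP⟩

lemma ncard_Cq [Finite F] (hk0 : k ≠ 0) (hk1 : k ≠ 1) : (Cq k).ncard = Nat.card F + 1 := by
  rw [← range_conicPoint hk0 hk1, Set.ncard_range_of_injective (conicPoint_injective hk0 hk1),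
    Projectivization.card_of_finrank_two F (Fin 2 → F) (Module.finrank_fin_fun F)]

lemma Cq_inter_Cq (h : k ≠ k') :
    Cq k ∩ Cq k' = {pt 1 0 0 (vec_ne_zero 0 one_ne_zero), pt 1 0 (-1) (vec_ne_zero 0 one_ne_zero),
      pt 0 1 0 (vec_ne_zero 1 one_ne_zero), pt 0 1 (-1) (vec_ne_zero 1 one_ne_zero)} := by
  ext P
  induction P using Projectivization.ind with | h v hv => ?_
  simp only [Set.mem_inter_iff, mem_Cq_mk, Set.mem_insert_iff, Set.mem_singleton_iff, pt,
    mk_eq_mk_iff']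
  constructor
  · rintro ⟨hk, hk'⟩
    unfold conicForm at hk hk'
    have hv01 : v 0 * v 1 = 0 := by
      have : (k - k') * (v 0 * v 1) = 0 := by linear_combination hk - hk'
      exact (mul_eq_zero.1 this).resolve_left (sub_ne_zero.2 h)
    rcases mul_eq_zero.1 hv01 with hv0 | hv1
    · have : v 2 * (v 2 + v 1) = 0 := by linear_combination hk - (k * v 1 + v 2) * hv0
      rcases mul_eq_zero.1 this with hv2 | hv2
      · exact Or.inr (Or.inr (Or.inl ⟨v 1, smul_vec3_eq (by linear_combination -hv0)
          (mul_one _) (by linear_combination -hv2)⟩))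
      · exact Or.inr (Or.inr (Or.inr ⟨v 1, smul_vec3_eq (by linear_combination -hv0)
          (mul_one _) (by linear_combination -hv2)⟩))
    · have : v 2 * (v 2 + v 0) = 0 := by linear_combination hk - (k * v 0 + v 2) * hv1
      rcases mul_eq_zero.1 this with hv2 | hv2
      · exact Or.inl ⟨v 0, smul_vec3_eq (mul_one _) (by linear_combination -hv1)
          (by linear_combination -hv2)⟩
      · exact Or.inr (Or.inl ⟨v 0, smul_vec3_eq (mul_one _) (by linear_combination -hv1)
          (by linear_combination -hv2)⟩)
  · rintro (⟨c, rfl⟩ | ⟨c, rfl⟩ | ⟨c, rfl⟩ | ⟨c, rfl⟩) <;>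
      simp [conicForm, sq]

lemma ncard_Cq_inter_Cq (h : k ≠ k') : (Cq k ∩ Cq k').ncard = 4 := by
  rw [Cq_inter_Cq h, Set.ncard_insert_of_notMem, Set.ncard_insert_of_notMem, Set.ncard_pair]
  · exact mk_ne_mk_of_apply_eq_zero _ _ 2 (by simp) (by simp)
  · simp only [Set.mem_insert_iff, Set.mem_singleton_iff, not_or]
    exact ⟨(mk_ne_mk_of_apply_eq_zero _ _ 0 (by simp) (by simp)).symm,
      (mk_ne_mk_of_apply_eq_zero _ _ 0 (by simp) (by simp)).symm⟩
  · simp only [Set.mem_insert_iff, Set.mem_singleton_iff, not_or]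
    exact ⟨mk_ne_mk_of_apply_eq_zero _ _ 2 (by simp) (by simp),
      (mk_ne_mk_of_apply_eq_zero _ _ 0 (by simp) (by simp)).symm,
      (mk_ne_mk_of_apply_eq_zero _ _ 0 (by simp) (by simp)).symm⟩

lemma charP_two_of_card_eq_four_pow [Fintype F] {m : ℕ} (h : Fintype.card F = 4 ^ m) :
    CharP F 2 := by
  refine CharTwo.of_one_ne_zero_of_two_eq_zero one_ne_zero ?_
  have h4 : (4 : F) ^ m = 0 := by exact_mod_cast h ▸ FiniteField.cast_card_eq_zero F
  have h22 : (2 : F) * 2 = 0 := by linear_combination eq_zero_of_pow_eq_zero h4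
  exact mul_self_eq_zero.1 h22

end

/-- In `PG(2,q)` with `q` an even power of `2`, if `a` is a primitive cube root of unity, then
`C_a ∪ C_(a²)` is an untouchable set of size `2q − 2`. -/
theorem untouchable_two_q_minus_two {F : Type} [Field F] [Fintype F] {q : ℕ}
    (hq : Fintype.card F = q) (hq4 : ∃ m : ℕ, q = 4 ^ m)
    (a : F) (ha1 : a ≠ 1) (ha3 : a ^ 3 = 1) :
    Untouchable (Cq a ∪ Cq (a ^ 2)) ∧ (Cq a ∪ Cq (a ^ 2)).ncard = 2 * q - 2 := by
  obtain ⟨m, rfl⟩ := hq4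
  have : CharP F 2 := charP_two_of_card_eq_four_pow hq
  have ha0 : a ≠ 0 := by rintro rfl; simp at ha3
  have ha4 : (a ^ 2) ^ 2 = a := by linear_combination a * ha3
  have ha2 : a ^ 2 ≠ a := fun h => ha1 (mul_left_cancel₀ ha0 (by linear_combination h))
  have ha21 : a ^ 2 ≠ 1 := fun h => ha1 (by linear_combination ha3 - a * h)
  have hNa : nucleus a ∈ Cq (a ^ 2) \ Cq a :=
    ⟨nucleus_mem_Cq_iff.2 rfl, nucleus_mem_Cq_iff.not.2 ha2.symm⟩
  have hNa2 : nucleus (a ^ 2) ∈ Cq a \ Cq (a ^ 2) :=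
    ⟨nucleus_mem_Cq_iff.2 ha4.symm, nucleus_mem_Cq_iff.not.2 (by rwa [ha4])⟩
  refine ⟨untouchable_Cq_union hNa hNa2, ?_⟩
  have hunion := Set.ncard_union_add_ncard_inter (Cq a) (Cq (a ^ 2))
  rw [ncard_Cq ha0 ha1, ncard_Cq (pow_ne_zero 2 ha0) ha21, ncard_Cq_inter_Cq ha2.symm,
    Nat.card_eq_fintype_card, hq] at hunion
  omega
end

section
/- In PG(2,q) with q ≥ 7 odd, there exist distinct nonzero a, b ∈ GF(q) such that the conics C_a = V(xy + az²) and C_b = V(xy + bz²) are mutually exterior, i.e., every point of C_a not on C_b is exterior to C_b and every point of C_b not on C_a is exterior to C_a. -/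
/-- The conic `C_k = V(xy + kz²)`. -/
def Ck {F : Type} [Field F] (k : F) : Set (PG2 F) :=
  {P | P.rep 0 * P.rep 1 + k * P.rep 2 ^ 2 = 0}

/-- A point `P` not on the point set `S` is exterior to `S` if it lies on exactly two
tangent lines of `S`. -/
def ExteriorTo {F : Type} [Field F] (P : PG2 F) (S : Set (PG2 F)) : Prop :=
  P ∉ S ∧ {l : PG2 F | IsTangent l S ∧ inc l P}.ncard = 2

/-- A point `P` not on the point set `S` is interior to `S` if it lies on no tangent line
of `S`. -/
def InteriorTo {F : Type} [Field F] (P : PG2 F) (S : Set (PG2 F)) : Prop :=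
  P ∉ S ∧ ∀ l : PG2 F, IsTangent l S → ¬ inc l P

/-!
Parametrize `C_k` (`k ≠ 0`) by `t ↦ (1 : -k t² : t)` together with `(0 : 1 : 0)`. A line
`(u : v : w)` then meets `C_k` in as many points as `w² + 4 k u v` has square roots, so the
tangents of `C_k` are the lines with `w² + 4 k u v = 0`: in line coordinates they form the conic
`C_{(4k)⁻¹}`. Counting the tangents through `P = (x : y : z) ∉ C_k` is therefore counting the
points of a conic on a line, and `P` is exterior to `C_k` iff `(x y + k z²) / k` is a square. For
`P ∈ C_a` this quantity is `b (b - a) (z / b)²` (with `k = b`), so `C_a` and `C_b` are mutually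
exterior as soon as `a (a - b)` and `b (b - a)` are squares. Take `a = 1`, `b = -τ²` with
`σ² - τ² = 1` and `σ, τ ≠ 0`; such `σ, τ` exist when `q ≥ 7`, since then some `u` has
`u ^ 5 ≠ u`.
-/

section

variable {K : Type*} [Field K] [NeZero (2 : K)]

open Classical in
lemma ncard_setOf_sq_eq (d : K) :
    {s : K | s ^ 2 = d}.ncard = if d = 0 then 1 else if IsSquare d then 2 else 0 := by
  split_ifs with hd hsq
  · subst hd
    simp [pow_eq_zero_iff]
  · obtain ⟨r, rfl⟩ := hsq
    have hr : r ≠ 0 := by rintro rfl; simp at hd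
    have hset : {s : K | s ^ 2 = r * r} = {r, -r} := by
      ext s
      simp [← sq, sq_eq_sq_iff_eq_or_eq_neg]
    rw [hset, Set.ncard_pair]
    exact fun h => hr (mul_left_cancel₀ (two_ne_zero (α := K)) (by linear_combination h))
  · have hset : {s : K | s ^ 2 = d} = ∅ :=
      Set.eq_empty_of_forall_notMem fun s hs => hsq ⟨s, by rw [← hs, sq]⟩
    rw [hset, Set.ncard_empty]

/-- The roots of a quadratic correspond to the square roots of its discriminant via
`x ↦ 2 a x + b`. -/
lemma ncard_setOf_quadratic_eq_zero {a b c : K} (ha : a ≠ 0) :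
    {x : K | a * (x * x) + b * x + c = 0}.ncard = {s : K | s ^ 2 = discrim a b c}.ncard := by
  have hinj : Function.Injective fun x : K => 2 * a * x + b := fun x y h => by
    simpa [ha, two_ne_zero] using h
  have himage : (fun x : K => 2 * a * x + b) '' {x | a * (x * x) + b * x + c = 0} =
      {s | s ^ 2 = discrim a b c} := by
    ext s
    simp only [Set.mem_image, Set.mem_ofPred_eq, quadratic_eq_zero_iff_discrim_eq_sq ha]
    refine ⟨fun ⟨x, hx, hxs⟩ => hxs ▸ hx.symm, fun hs => ⟨(s - b) / (2 * a), ?_, ?_⟩⟩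
    all_goals field_simp
    · simp [hs]
    · ring
  rw [← himage, Set.ncard_image_of_injective _ hinj]

open Polynomial in
lemma exists_sq_sub_sq_eq_one [Fintype K] (h7 : 7 ≤ Fintype.card K) :
    ∃ σ τ : K, σ ≠ 0 ∧ τ ≠ 0 ∧ σ ^ 2 - τ ^ 2 = 1 := by
  have hdeg : (X ^ 5 - X : K[X]).natDegree = 5 := by compute_degree!
  obtain ⟨u, hu⟩ := (X ^ 5 - X : K[X]).exists_eval_ne_zero_of_natDegree_lt_card
    (fun h => by simp [h] at hdeg)
    (by rw [hdeg, Cardinal.mk_fintype]; exact_mod_cast (by omega : 5 < Fintype.card K))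
  simp only [eval_sub, eval_pow, eval_X] at hu
  have hu0 : u ≠ 0 := by rintro rfl; simp at hu
  -- `σ ± τ = u ^ (±1)`, and `u ^ 4 ≠ 1` makes `σ` and `τ` nonzero
  refine ⟨(u + u⁻¹) / 2, (u - u⁻¹) / 2, fun h => hu ?_, fun h => hu ?_, ?_⟩
  · field_simp at h
    linear_combination u * (u ^ 2 - 1) * h
  · field_simp at h
    linear_combination u * (u ^ 2 + 1) * h
  · field_simp
    ring

end

section ProjectivePlane

open Projectivization

variable {F : Type} [Field F]

lemma pt_eq_pt_iff {x y z x' y' z' : F} (h : ![x, y, z] ≠ 0) (h' : ![x', y', z'] ≠ 0) :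
    pt x y z h = pt x' y' z' h' ↔ ∃ c : F, c * x' = x ∧ c * y' = y ∧ c * z' = z := by
  simp [pt, mk_eq_mk_iff', funext_iff, Fin.forall_fin_succ]

lemma exists_eq_pt (P : PG2 F) : ∃ x y z : F, ∃ h : ![x, y, z] ≠ 0, P = pt x y z h := by
  have hv : ![P.rep 0, P.rep 1, P.rep 2] = P.rep := by ext i; fin_cases i <;> rfl
  refine ⟨_, _, _, hv ▸ P.rep_nonzero, ?_⟩
  conv_lhs => rw [← P.mk_rep]
  simp only [pt, hv]

lemma exists_rep_pt_eq_smul (x y z : F) (h : ![x, y, z] ≠ 0) :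
    ∃ c : F, c ≠ 0 ∧ (pt x y z h).rep = c • ![x, y, z] := by
  obtain ⟨c, hc⟩ := exists_smul_eq_mk_rep F ![x, y, z] h
  exact ⟨c, c.ne_zero, hc.symm⟩

lemma pt_mem_Ck_iff {k x y z : F} (h : ![x, y, z] ≠ 0) :
    pt x y z h ∈ Ck k ↔ x * y + k * z ^ 2 = 0 := by
  obtain ⟨c, hc, hrep⟩ := exists_rep_pt_eq_smul x y z h
  have hscale : (pt x y z h).rep 0 * (pt x y z h).rep 1 + k * (pt x y z h).rep 2 ^ 2 =
      c ^ 2 * (x * y + k * z ^ 2) := by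
    simp only [hrep, Pi.smul_apply, smul_eq_mul, Matrix.cons_val]
    ring
  change _ = 0 ↔ _
  simp [hscale, hc]

lemma inc_pt_iff (l : PG2 F) {x y z : F} (h : ![x, y, z] ≠ 0) :
    inc l (pt x y z h) ↔ l.rep 0 * x + l.rep 1 * y + l.rep 2 * z = 0 := by
  obtain ⟨c, hc, hrep⟩ := exists_rep_pt_eq_smul x y z h
  have hscale : l.rep 0 * (pt x y z h).rep 0 + l.rep 1 * (pt x y z h).rep 1 +
      l.rep 2 * (pt x y z h).rep 2 = c * (l.rep 0 * x + l.rep 1 * y + l.rep 2 * z) := by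
    simp only [hrep, Pi.smul_apply, smul_eq_mul, Matrix.cons_val]
    ring
  simp [inc, hscale, hc]

lemma inc_comm (l P : PG2 F) : inc l P ↔ inc P l := by
  simp only [inc, mul_comm]

/-- The one point of `C_k` missed by `conicPt k`. -/
noncomputable def yPoint : PG2 F := pt 0 1 0 (vec_ne_zero 1 (by simp))

noncomputable def conicPt (k t : F) : PG2 F := pt 1 (-k * t ^ 2) t (vec_ne_zero 0 (by simp))

lemma conicPt_injective (k : F) : Function.Injective (conicPt k) := by
  intro t t' h
  obtain ⟨c, hc1, -, hct⟩ := (pt_eq_pt_iff _ _).1 h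
  rw [mul_one] at hc1
  rw [← hct, hc1, one_mul]

lemma yPoint_ne_conicPt (k t : F) : yPoint ≠ conicPt k t := by
  intro h
  obtain ⟨c, hc0, hc1, -⟩ := (pt_eq_pt_iff _ _).1 h
  rw [mul_one] at hc0
  simp [hc0] at hc1

lemma Ck_eq_insert_range {k : F} (hk : k ≠ 0) :
    Ck k = insert yPoint (Set.range (conicPt k)) := by
  ext P
  obtain ⟨x, y, z, h, rfl⟩ := exists_eq_pt P
  simp only [Set.mem_insert_iff, Set.mem_range, pt_mem_Ck_iff, yPoint, conicPt, pt_eq_pt_iff]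
  constructor
  · intro hP
    by_cases hx : x = 0
    · have hz : z = 0 := by simpa [hx, hk] using hP
      exact Or.inl ⟨y, by simp [hx, hz]⟩
    · refine Or.inr ⟨z / x, x⁻¹, by field_simp, ?_, by field_simp⟩
      field_simp
      linear_combination hP
  · rintro (⟨c, hx, -, hz⟩ | ⟨t, c, hx, hy, hz⟩)
    · simp [← hx, ← hz]
    · have hc : c ≠ 0 := left_ne_zero_of_mul_eq_one hx
      have hscale : c ^ 2 * (x * y + k * z ^ 2) = 0 := by
        linear_combination (c * y) * hx + hy + k * (c * z + t) * hz
      simpa [hc] using hscale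

lemma inc_yPoint_iff (l : PG2 F) : inc l yPoint ↔ l.rep 1 = 0 := by
  simp [yPoint, inc_pt_iff]

lemma inc_conicPt_iff (l : PG2 F) (k t : F) :
    inc l (conicPt k t) ↔ -k * l.rep 1 * (t * t) + l.rep 2 * t + l.rep 0 = 0 := by
  rw [conicPt, inc_pt_iff]
  constructor <;> intro h <;> linear_combination h

/-- Substituting `conicPt k t` into the line `l = (u : v : w)` gives the quadratic
`-k v t² + w t + u`; this is its discriminant `w² + 4 k u v`. -/
noncomputable def conicLineDiscrim (k : F) (l : PG2 F) : F :=
  discrim (-k * l.rep 1) (l.rep 2) (l.rep 0)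

lemma sep_Ck_inc_eq {k : F} (hk : k ≠ 0) (l : PG2 F) :
    {P ∈ Ck k | inc l P} = {P | P = yPoint ∧ l.rep 1 = 0} ∪
      conicPt k '' {t | -k * l.rep 1 * (t * t) + l.rep 2 * t + l.rep 0 = 0} := by
  ext P
  rw [Ck_eq_insert_range hk]
  constructor
  · rintro ⟨rfl | ⟨t, rfl⟩, hP⟩
    · exact Or.inl ⟨rfl, (inc_yPoint_iff l).1 hP⟩
    · exact Or.inr ⟨t, (inc_conicPt_iff l k t).1 hP, rfl⟩
  · rintro (⟨rfl, hv⟩ | ⟨t, ht, rfl⟩)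
    · exact ⟨Or.inl rfl, (inc_yPoint_iff l).2 hv⟩
    · exact ⟨Or.inr ⟨t, rfl⟩, (inc_conicPt_iff l k t).2 ht⟩

lemma ncard_sep_Ck_inc [NeZero (2 : F)] {k : F} (hk : k ≠ 0) (l : PG2 F) :
    {P ∈ Ck k | inc l P}.ncard = {s : F | s ^ 2 = conicLineDiscrim k l}.ncard := by
  rw [sep_Ck_inc_eq hk, conicLineDiscrim]
  by_cases hv : l.rep 1 = 0
  · have hdisc : discrim (-k * l.rep 1) (l.rep 2) (l.rep 0) = l.rep 2 ^ 2 := by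
      simp [discrim, hv]
    rw [hdisc, ncard_setOf_sq_eq]
    simp only [hv, and_true, mul_zero, zero_mul, zero_add, Set.ofPred_eq_eq_singleton,
      Set.singleton_union]
    by_cases hw : l.rep 2 = 0
    · have hu : l.rep 0 ≠ 0 := fun hu =>
        l.rep_nonzero (by ext i; fin_cases i <;> simp [hu, hv, hw])
      simp [hw, hu]
    · have hroot : {t | l.rep 2 * t + l.rep 0 = 0} = {-l.rep 0 / l.rep 2} := by
        ext t
        rw [Set.mem_ofPred_eq, Set.mem_singleton_iff, eq_div_iff hw]
        constructor <;> intro h <;> linear_combination h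
      rw [hroot, Set.image_singleton, Set.ncard_pair (yPoint_ne_conicPt k _)]
      simp [hw, IsSquare.sq]
  · have hempty : {P : PG2 F | P = yPoint ∧ l.rep 1 = 0} = ∅ := by simp [hv]
    rw [hempty, Set.empty_union, Set.ncard_image_of_injective _ (conicPt_injective k)]
    exact ncard_setOf_quadratic_eq_zero (mul_ne_zero (neg_ne_zero.2 hk) hv)

section OddCharacteristic

variable [NeZero (2 : F)]

lemma isTangent_Ck_iff {k : F} (hk : k ≠ 0) (l : PG2 F) :
    IsTangent l (Ck k) ↔ conicLineDiscrim k l = 0 := by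
  rw [IsTangent, ncard_sep_Ck_inc hk, ncard_setOf_sq_eq]
  split_ifs <;> simp_all

lemma setOf_isTangent_Ck_inc {k : F} (hk : k ≠ 0) (P : PG2 F) :
    {l | IsTangent l (Ck k) ∧ inc l P} = {l ∈ Ck (4 * k)⁻¹ | inc P l} := by
  have h4 : (4 : F) ≠ 0 := by
    simpa [show (4 : F) = 2 * 2 by norm_num] using two_ne_zero (α := F)
  ext l
  change IsTangent l (Ck k) ∧ inc l P ↔ l ∈ Ck (4 * k)⁻¹ ∧ inc P l
  rw [isTangent_Ck_iff hk, inc_comm l P, conicLineDiscrim, discrim]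
  refine and_congr_left' ⟨fun h => ?_, fun h => ?_⟩
  · change _ = _
    field_simp
    linear_combination h
  · change _ = _ at h
    field_simp at h
    linear_combination h

lemma exteriorTo_Ck_iff {k : F} (hk : k ≠ 0) {P : PG2 F} (hP : P ∉ Ck k) :
    ExteriorTo P (Ck k) ↔ IsSquare ((P.rep 0 * P.rep 1 + k * P.rep 2 ^ 2) / k) := by
  have h4 : (4 : F) ≠ 0 := by
    simpa [show (4 : F) = 2 * 2 by norm_num] using two_ne_zero (α := F)
  have hdisc : conicLineDiscrim (4 * k)⁻¹ P = (P.rep 0 * P.rep 1 + k * P.rep 2 ^ 2) / k := by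
    rw [conicLineDiscrim, discrim]
    field_simp
    ring
  have hQ : (P.rep 0 * P.rep 1 + k * P.rep 2 ^ 2) / k ≠ 0 := div_ne_zero hP hk
  rw [ExteriorTo, setOf_isTangent_Ck_inc hk, ncard_sep_Ck_inc (by simp [hk, h4]), hdisc,
    ncard_setOf_sq_eq]
  split_ifs <;> simp_all

lemma exteriorTo_Ck_of_mem_Ck {a b : F} (hb : b ≠ 0) (hsq : IsSquare (b * (b - a)))
    {P : PG2 F} (hPa : P ∈ Ck a) (hPb : P ∉ Ck b) : ExteriorTo P (Ck b) := by
  rw [exteriorTo_Ck_iff hb hPb]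
  change P.rep 0 * P.rep 1 + a * P.rep 2 ^ 2 = 0 at hPa
  have hQ : (P.rep 0 * P.rep 1 + b * P.rep 2 ^ 2) / b = b * (b - a) * (P.rep 2 / b) ^ 2 := by
    field_simp
    linear_combination hPa
  rw [hQ]
  exact hsq.mul (IsSquare.sq _)

end OddCharacteristic

end ProjectivePlane

/-- In `PG(2,q)` with `q ≥ 7` odd, there exist distinct nonzero `a, b` such that the conics
`C_a = V(xy + az²)` and `C_b = V(xy + bz²)` are mutually exterior. -/
theorem exists_mutually_exterior_conics {F : Type} [Field F] [Fintype F] {q : ℕ}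
    (hq : Fintype.card F = q) (hodd : Odd q) (h7 : 7 ≤ q) :
    ∃ a b : F, a ≠ 0 ∧ b ≠ 0 ∧ a ≠ b ∧
      (∀ P : PG2 F, P ∈ Ck a → P ∉ Ck b → ExteriorTo P (Ck b)) ∧
      (∀ P : PG2 F, P ∈ Ck b → P ∉ Ck a → ExteriorTo P (Ck a)) := by
  subst hq
  have : NeZero (2 : F) := ⟨Ring.two_ne_zero fun h =>
    Nat.not_even_iff_odd.2 hodd (Nat.even_iff.2 (FiniteField.even_card_of_char_two h))⟩
  obtain ⟨σ, τ, hσ, hτ, hστ⟩ := exists_sq_sub_sq_eq_one h7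
  refine ⟨1, -τ ^ 2, one_ne_zero, by simpa using hτ, fun h => hσ ?_,
    fun P hPa hPb => exteriorTo_Ck_of_mem_Ck (by simpa using hτ) ⟨σ * τ, ?_⟩ hPa hPb,
    fun P hPb hPa => exteriorTo_Ck_of_mem_Ck one_ne_zero ⟨σ, ?_⟩ hPb hPa⟩
  · exact pow_eq_zero_iff two_ne_zero |>.1 (by linear_combination hστ + h)
  · linear_combination -τ ^ 2 * hστ
  · linear_combination -hστ
end

section
/- In PG(2,q) with q ≡ 3 (mod 4), q ≥ 7, let b ∈ GF(q) be a non-square such that b − 1 is also a non-square. Then every line through the point (0:0:1) meets C_1 ∪ C_b in at least one point, where C_k = V(xy + kz²). -/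
open Projectivization

theorem exists_mul_sq_eq_of_not_isSquare {F : Type} [Field F] [Fintype F] {a b : F}
    (ha : ¬ IsSquare a) (hb : ¬ IsSquare b) : ∃ z : F, b * z ^ 2 = a := by
  classical
  have ha0 : a ≠ 0 := by rintro rfl; exact ha IsSquare.zero
  have hb0 : b ≠ 0 := by rintro rfl; exact hb IsSquare.zero
  have hab : IsSquare (a * b) := by
    refine (quadraticChar_one_iff_isSquare (mul_ne_zero ha0 hb0)).1 ?_
    rw [map_mul, quadraticChar_neg_one_iff_not_isSquare.2 ha,
      quadraticChar_neg_one_iff_not_isSquare.2 hb]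
    norm_num
  obtain ⟨w, hw⟩ := hab
  exact ⟨w / b, by field_simp; linear_combination -hw⟩

section Incidence

variable {F : Type} [Field F]

theorem inc_mk_iff (l : PG2 F) {v : Fin 3 → F} (hv : v ≠ 0) :
    inc l (mk F v hv) ↔ l.rep 0 * v 0 + l.rep 1 * v 1 + l.rep 2 * v 2 = 0 := by
  obtain ⟨a, ha⟩ := exists_smul_eq_mk_rep F v hv
  simp only [inc, ← ha, Pi.smul_apply, Units.smul_def, smul_eq_mul]
  rw [show l.rep 0 * (a * v 0) + l.rep 1 * (a * v 1) + l.rep 2 * (a * v 2)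
      = a * (l.rep 0 * v 0 + l.rep 1 * v 1 + l.rep 2 * v 2) by ring, mul_eq_zero]
  simp [a.ne_zero]

theorem mk_mem_Ck_iff (k : F) {v : Fin 3 → F} (hv : v ≠ 0) :
    mk F v hv ∈ Ck k ↔ v 0 * v 1 + k * v 2 ^ 2 = 0 := by
  obtain ⟨a, ha⟩ := exists_smul_eq_mk_rep F v hv
  simp only [Ck, Set.mem_ofPred_eq, ← ha, Pi.smul_apply, Units.smul_def, smul_eq_mul]
  rw [show a * v 0 * (a * v 1) + k * (a * v 2) ^ 2 = a ^ 2 * (v 0 * v 1 + k * v 2 ^ 2) by ring,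
    mul_eq_zero]
  simp [a.ne_zero]

theorem inc_pt_zero_zero_one_iff (l : PG2 F) :
    inc l (pt (0 : F) 0 1 (vec_ne_zero 2 (by simp))) ↔ l.rep 2 = 0 := by
  simp [pt, inc_mk_iff]

/-- On a line `[u₀, u₁, 0]` through `(0:0:1)` lie the points `(u₁ : -u₀ : z)`, which are on `C_k`
exactly when `k z² = u₀ u₁`. -/
theorem exists_mem_Ck_inc_of_mul_sq_eq {l : PG2 F} (hl : l.rep 2 = 0) {k z : F}
    (hz : k * z ^ 2 = l.rep 0 * l.rep 1) : ∃ P ∈ Ck k, inc l P := by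
  have hne : ![l.rep 1, -l.rep 0, z] ≠ 0 := by
    by_cases h1 : l.rep 1 = 0
    · refine vec_ne_zero 1 fun h0 => l.rep_nonzero ?_
      ext i
      fin_cases i <;> simp_all
    · exact vec_ne_zero 0 h1
  refine ⟨pt _ _ _ hne, ?_, ?_⟩
  · rw [pt, mk_mem_Ck_iff]
    simp only [Matrix.cons_val_zero, Matrix.cons_val_one, Matrix.cons_val_two, Matrix.head_cons,
      Matrix.tail_cons]
    linear_combination hz
  · rw [pt, inc_mk_iff]
    simp only [Matrix.cons_val_zero, Matrix.cons_val_one, Matrix.cons_val_two, Matrix.head_cons,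
      Matrix.tail_cons, hl]
    ring

end Incidence

theorem lines_through_center_meet {F : Type} [Field F] [Fintype F]
    (b : F) (hb : ¬ IsSquare b) :
    ∀ l : PG2 F, inc l (pt (0 : F) 0 1 (vec_ne_zero 2 (by simp))) →
      ∃ P ∈ Ck 1 ∪ Ck b, inc l P := by
  intro l hl
  rw [inc_pt_zero_zero_one_iff] at hl
  by_cases hsq : IsSquare (l.rep 0 * l.rep 1)
  · obtain ⟨w, hw⟩ := hsq
    obtain ⟨P, hP, hlP⟩ := exists_mem_Ck_inc_of_mul_sq_eq (k := 1) (z := w) hl (by rw [hw]; ring)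
    exact ⟨P, Or.inl hP, hlP⟩
  · obtain ⟨z, hz⟩ := exists_mul_sq_eq_of_not_isSquare hsq hb
    obtain ⟨P, hP, hlP⟩ := exists_mem_Ck_inc_of_mul_sq_eq hl hz
    exact ⟨P, Or.inr hP, hlP⟩
end
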